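/- arXiv:0811.0056 — 2 statements merged into one kernel-verified Lean document; each statement's English description precedes it below -/
import Mathlib

section
/- For every integer k ≥ 1 and every x ∈ X one has S^k e_x = Σ_{y ∈ (T^k)⁻¹({x})} (I_k(y))^{-1/2} e_y, where the sum runs over the (finite) fiber of the k-th iterate T^k over x. -/
open Classical

noncomputable section

/-- `ℓ²(X)`: the Hilbert space of square-summable complex families indexed by `X`. -/
abbrev l2 (X : Type*) : Type _ := lp (fun _ : X => ℂ) 2

/-- The orthonormal basis vector `e_x` of `ℓ²(X)`. -/
def e {X : Type*} (x : X) : l2 X := lp.single 2 x 1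

/-- `I_k(x) = ∏_{j=1}^{k} ℒ(1)(T^j(x))`, where `ℒ(1)(x) = card (T⁻¹({x}))`
(with `I_0 = 1`). -/
def Ik {X : Type*} (T : X → X) (k : ℕ) (x : X) : ℝ :=
  ∏ j ∈ Finset.range k, (Nat.card (T ⁻¹' {T^[j + 1] x}) : ℝ)

end

/-! Pushing the weight `ℒ(1)(x)^{-1/2}` of `S e_x` onto each preimage `y` of `x` as
`ℒ(1)(T y)^{-1/2}`, `S` becomes a weighted sum over a finite-to-one map, and iterating multiplies
the weights along `y, T y, …, T^{k-1} y`; that product is `I_k(y)^{-1/2}`. Fibers of a covering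
map of a compact space are compact and discrete, hence finite. -/

open Finset

theorem IsCoveringMap.finite_preimage_singleton {E X : Type*} [TopologicalSpace E]
    [TopologicalSpace X] [CompactSpace E] [T1Space X] {f : E → X} (hf : IsCoveringMap f)
    (x : X) : (f ⁻¹' {x}).Finite :=
  (isClosed_singleton.preimage hf.continuous).isCompact.finite
    (isDiscrete_iff_discreteTopology.mpr (hf x).discreteTopology_fiber)

theorem finite_preimage_iterate_singleton {X : Type*} {T : X → X}
    (hfin : ∀ x, (T ⁻¹' {x}).Finite) (k : ℕ) (x : X) : (T^[k] ⁻¹' {x}).Finite := by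
  induction k generalizing x with
  | zero => simp
  | succ k ih =>
    rw [Function.iterate_succ, Set.preimage_comp]
    exact (ih x).preimage' fun y _ => hfin y

theorem Module.End.pow_apply_eq_finsum_preimage_iterate {R M X : Type*} [CommSemiring R]
    [AddCommMonoid M] [Module R M] {T : X → X} (hfin : ∀ x, (T ⁻¹' {x}).Finite)
    (S : Module.End R M) (e : X → M) (w : X → R)
    (hS : ∀ x, S (e x) = ∑ᶠ y ∈ T ⁻¹' {x}, w y • e y) (k : ℕ) (x : X) :
    (S ^ k) (e x) = ∑ᶠ y ∈ T^[k] ⁻¹' {x}, (∏ j ∈ range k, w (T^[j] y)) • e y := by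
  induction k generalizing x with
  | zero => simp
  | succ k ih =>
    calc (S ^ (k + 1)) (e x) = ∑ᶠ y ∈ T ⁻¹' {x}, w y • (S ^ k) (e y) := by
          rw [pow_succ, Module.End.mul_apply, hS]
          simpa using (S ^ k).toAddMonoidHom.map_finsum_mem (fun y => w y • e y) (hfin x)
      _ = ∑ᶠ y ∈ T ⁻¹' {x}, ∑ᶠ z ∈ T^[k] ⁻¹' {y},
            (∏ j ∈ range (k + 1), w (T^[j] z)) • e z := by
          refine finsum_mem_congr rfl fun y _ => ?_
          rw [ih, smul_finsum_mem (finite_preimage_iterate_singleton hfin k y)]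
          refine finsum_mem_congr rfl fun z hz => ?_
          rw [smul_smul, prod_range_succ, show T^[k] z = y from hz, mul_comm]
      _ = _ := by
          rw [← finsum_mem_biUnion (Set.pairwiseDisjoint_fiber _ _) (hfin x)
            fun y _ => finite_preimage_iterate_singleton hfin k y,
            Set.biUnion_preimage_singleton, ← Set.preimage_comp, ← Function.iterate_succ']

theorem inv_sqrt_Ik_eq_prod {X : Type*} (T : X → X) (k : ℕ) (x : X) :
    (√(Ik T k x))⁻¹ = ∏ j ∈ range k, (√(Nat.card (T ⁻¹' {T (T^[j] x)})))⁻¹ := by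
  simp only [Ik, Real.sqrt_prod _ fun _ _ => Nat.cast_nonneg _, prod_inv_distrib,
    Function.iterate_succ_apply']

theorem pow_S_apply_basis_general {X : Type*} [TopologicalSpace X] [CompactSpace X] [T2Space X]
    (T : X → X) (hT : IsCoveringMap T)
    (S : l2 X →L[ℂ] l2 X)
    (hS : ∀ x : X, S (e x) = (((Real.sqrt (Nat.card (T ⁻¹' {x})))⁻¹ : ℝ) : ℂ) •
      ∑ᶠ y ∈ T ⁻¹' {x}, e y) :
    ∀ k : ℕ, 1 ≤ k → ∀ x : X,
      (S ^ k) (e x) =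
        ∑ᶠ y ∈ (T^[k]) ⁻¹' {x}, (((Real.sqrt (Ik T k y))⁻¹ : ℝ) : ℂ) • e y := by
  intro k _ x
  have hfin := hT.finite_preimage_singleton
  have hS_weighted : ∀ x, S (e x) =
      ∑ᶠ y ∈ T ⁻¹' {x}, (((√(Nat.card (T ⁻¹' {T y})))⁻¹ : ℝ) : ℂ) • e y := by
    intro x
    rw [hS, smul_finsum_mem (hfin x)]
    exact finsum_mem_congr rfl fun y hy => by rw [show T y = x from hy]
  have hpow := Module.End.pow_apply_eq_finsum_preimage_iterate hfin (S : Module.End ℂ (l2 X)) e _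
    hS_weighted k x
  rw [← ContinuousLinearMap.toLinearMap_pow, ContinuousLinearMap.coe_coe] at hpow
  rw [hpow]
  exact finsum_mem_congr rfl fun y _ => by rw [inv_sqrt_Ik_eq_prod, Complex.ofReal_prod]

/-- Let `X` be a compact Hausdorff space, `T : X → X` a covering map and
`S` the bounded operator on `ℓ²(X)` with `S e_x = (ℒ(1)(x))^{-1/2} ∑_{y ∈ T⁻¹({x})} e_y`.
Then for every `k ≥ 1` and every `x ∈ X` one has
`S^k e_x = ∑_{y ∈ (T^k)⁻¹({x})} (I_k(y))^{-1/2} e_y`. -/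
theorem pow_S_apply_basis {X : Type*} [TopologicalSpace X] [CompactSpace X] [T2Space X]
    (T : X → X) (hT : IsCoveringMap T) (hTsurj : Function.Surjective T)
    (S : l2 X →L[ℂ] l2 X)
    (hS : ∀ x : X, S (e x) = (((Real.sqrt (Nat.card (T ⁻¹' {x})))⁻¹ : ℝ) : ℂ) •
      ∑ᶠ y ∈ T ⁻¹' {x}, e y) :
    ∀ k : ℕ, 1 ≤ k → ∀ x : X,
      (S ^ k) (e x) =
        ∑ᶠ y ∈ (T^[k]) ⁻¹' {x}, (((Real.sqrt (Ik T k y))⁻¹ : ℝ) : ℂ) • e y :=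
  pow_S_apply_basis_general T hT S hS
end

section
/- Let V₁, …, V_t be a finite open cover of X such that the restriction of T to each V_i is injective, let v₁, …, v_t : X → [0,1] be a continuous partition of unity subordinate to this cover (i.e. Σᵢ vᵢ = 1 and the support of vᵢ is contained in Vᵢ), and set uᵢ = ((ℒ(1)∘T)·vᵢ)^{1/2}. Then Σ_{i=1}^{t} M_{uᵢ} S S* M_{uᵢ} = 1 as bounded operators on ℓ²(X). -/
open Classical

/-!
On basis vectors `S* e_x = N(Tx)^{-1/2} e_{Tx}`, where `N = ℒ(1)`, so
`M_{uᵢ} S S* M_{uᵢ} e_x = ∑_{Tz = Tx} √(vᵢ x) √(vᵢ z) e_z`. Summed over `i`, the coefficient of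
`e_x` is `∑ᵢ vᵢ x = 1`, and that of `e_z` with `z ≠ x` vanishes: `vᵢ x vᵢ z ≠ 0` would put the two
points of the same fibre into `Vᵢ`, on which `T` is injective.
-/

open ContinuousLinearMap Set
open scoped InnerProductSpace ComplexConjugate

section l2Basis

variable {X : Type*}

lemma lp_single_eq_smul_e (x : X) (c : ℂ) : lp.single 2 x c = c • e x := by
  rw [e, ← lp.single_smul, smul_eq_mul, mul_one]

lemma e_apply (x y : X) : e x y = if y = x then 1 else 0 := by
  rw [e, lp.single_apply, Pi.single_apply]

lemma inner_e_left (x : X) (f : l2 X) : ⟪e x, f⟫_ℂ = f x := by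
  simp [e, lp.inner_single_left, RCLike.inner_apply]

lemma sum_e_apply (s : Finset X) (w : X) : (∑ z ∈ s, e z) w = if w ∈ s then 1 else 0 := by
  rw [lp.coeFn_sum, Finset.sum_apply]
  simp [e_apply]

lemma ContinuousLinearMap.ext_e {A B : l2 X →L[ℂ] l2 X} (h : ∀ x, A (e x) = B (e x)) :
    A = B := by
  refine ext fun f => ?_
  have hf : HasSum (fun x => lp.single 2 x (f x)) f := lp.hasSum_single (by norm_num) f
  have hAB : ∀ x, A (lp.single 2 x (f x)) = B (lp.single 2 x (f x)) := fun x => by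
    rw [lp_single_eq_smul_e, map_smul, map_smul, h]
  exact (hf.mapL A).unique (by simpa only [hAB] using hf.mapL B)

lemma adjoint_apply_e_apply (S : l2 X →L[ℂ] l2 X) (x y : X) :
    adjoint S (e x) y = conj (S (e y) x) := by
  rw [← inner_e_left, adjoint_inner_right, ← inner_conj_symm, inner_e_left]

end l2Basis

section Fibres

variable {X : Type*} {T : X → X} {F : X → Finset X}

lemma adjoint_apply_e_of_apply_e (hF : ∀ y z, z ∈ F y ↔ T z = y) {S : l2 X →L[ℂ] l2 X}
    {c : X → ℝ} (hS : ∀ y, S (e y) = (c y : ℂ) • ∑ z ∈ F y, e z) (x : X) :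
    adjoint S (e x) = (c (T x) : ℂ) • e (T x) := by
  refine lp.ext (funext fun y => ?_)
  simp only [adjoint_apply_e_apply, hS, lp.coeFn_smul, Pi.smul_apply, sum_e_apply, hF, e_apply]
  split_ifs <;> simp_all [Complex.conj_ofReal]

lemma comp_adjoint_comp_apply_e_of_apply_e (hF : ∀ y z, z ∈ F y ↔ T z = y)
    {S M : l2 X →L[ℂ] l2 X} {a c : X → ℝ}
    (hS : ∀ y, S (e y) = (c y : ℂ) • ∑ z ∈ F y, e z) (hM : ∀ x, M (e x) = (a x : ℂ) • e x)
    (x : X) :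
    (M ∘L S ∘L adjoint S ∘L M) (e x) =
      ∑ z ∈ F (T x), ((a x * c (T x) ^ 2 * a z : ℝ) : ℂ) • e z := by
  simp only [comp_apply, hM, map_smul, adjoint_apply_e_of_apply_e hF hS, hS, map_sum,
    Finset.smul_sum, smul_smul]
  refine Finset.sum_congr rfl fun z _ => ?_
  push_cast
  ring_nf

end Fibres

lemma finite_preimage_singleton_of_injOn_cover {X ι : Type*} [Finite ι] {T : X → X}
    {V : ι → Set X} (hcover : ⋃ i, V i = univ) (hinj : ∀ i, InjOn T (V i)) (y : X) :
    (T ⁻¹' {y}).Finite := by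
  have hfib : T ⁻¹' {y} = ⋃ i, V i ∩ T ⁻¹' {y} := by
    rw [← iUnion_inter, hcover, univ_inter]
  rw [hfib]
  exact finite_iUnion fun i => Subsingleton.finite fun a ha b hb =>
    hinj i ha.1 hb.1 (ha.2.trans hb.2.symm)

lemma sum_sqrt_mul_sqrt_eq_ite {X ι : Type*} [Fintype ι] {T : X → X} {V : ι → Set X}
    (hinj : ∀ i, InjOn T (V i)) {v : ι → X → ℝ} (hv0 : ∀ i x, 0 ≤ v i x)
    (hvsum : ∀ x, ∑ i, v i x = 1) (hvsupp : ∀ i, Function.support (v i) ⊆ V i) {x z : X}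
    (hz : T z = T x) : ∑ i, √(v i x) * √(v i z) = if z = x then 1 else 0 := by
  split_ifs with hzx
  · subst hzx
    simp_rw [Real.mul_self_sqrt (hv0 _ _), hvsum]
  · refine Finset.sum_eq_zero fun i _ => ?_
    by_contra hne
    have hx : v i x ≠ 0 := fun h => hne (by simp [h])
    have hz' : v i z ≠ 0 := fun h => hne (by simp [h])
    exact hzx (hinj i (hvsupp i hz') (hvsupp i hx) hz)

open ContinuousLinearMap in
theorem sum_Mu_S_adjointS_Mu_eq_one_general {X : Type*} [TopologicalSpace X] (T : X → X)
    (S : l2 X →L[ℂ] l2 X)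
    (hS : ∀ x : X, S (e x) = (((Real.sqrt (Nat.card (T ⁻¹' {x})))⁻¹ : ℝ) : ℂ) •
      ∑ᶠ y ∈ T ⁻¹' {x}, e y)
    (t : ℕ) (V : Fin t → Set X)
    (hVcover : (⋃ i, V i) = Set.univ) (hVinj : ∀ i, Set.InjOn T (V i))
    (v : Fin t → C(X, ℝ)) (hv01 : ∀ i x, v i x ∈ Set.Icc (0 : ℝ) 1)
    (hvsum : ∀ x : X, ∑ i, v i x = 1) (hvsupp : ∀ i, tsupport (v i) ⊆ V i)
    (Mu : Fin t → (l2 X →L[ℂ] l2 X))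
    (hMu : ∀ i (x : X), Mu i (e x) =
      ((Real.sqrt ((Nat.card (T ⁻¹' {T x}) : ℝ) * v i x) : ℝ) : ℂ) • e x) :
    ∑ i, Mu i ∘L S ∘L (adjoint S) ∘L Mu i = 1 := by
  have hfin := finite_preimage_singleton_of_injOn_cover hVcover hVinj
  have hF (y z : X) : z ∈ (hfin y).toFinset ↔ T z = y := (hfin y).mem_toFinset
  have hS' (y : X) : S (e y) = (((√(Nat.card (T ⁻¹' {y})))⁻¹ : ℝ) : ℂ) •
      ∑ z ∈ (hfin y).toFinset, e z := by
    rw [hS, finsum_mem_eq_finite_toFinset_sum _ (hfin y)]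
  have hcoef (i : Fin t) {x z : X} (hz : T z = T x) :
      √(Nat.card (T ⁻¹' {T x}) * v i x) * (√(Nat.card (T ⁻¹' {T x})))⁻¹ ^ 2 *
        √(Nat.card (T ⁻¹' {T z}) * v i z) = √(v i x) * √(v i z) := by
    have hN : (0 : ℝ) < Nat.card (T ⁻¹' {T x}) := by
      rw [Nat.card_coe_set_eq, Nat.cast_pos, Set.ncard_pos (hfin _)]
      exact ⟨x, rfl⟩
    rw [hz, Real.sqrt_mul hN.le, Real.sqrt_mul hN.le]
    field_simp
  refine ext_e fun x => ?_
  simp only [sum_apply, comp_adjoint_comp_apply_e_of_apply_e hF hS' (hMu _)]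
  rw [Finset.sum_comm]
  calc _ = ∑ z ∈ (hfin (T x)).toFinset, if z = x then e z else 0 := by
        refine Finset.sum_congr rfl fun z hz => ?_
        have hTz : T z = T x := (hF _ _).1 hz
        rw [← Finset.sum_smul, ← Complex.ofReal_sum, Finset.sum_congr rfl fun i _ => hcoef i hTz,
          sum_sqrt_mul_sqrt_eq_ite hVinj (fun i x => (hv01 i x).1) hvsum
            (fun i => (subset_tsupport _).trans (hvsupp i)) hTz]
        split_ifs <;> simp
    _ = e x := by rw [Finset.sum_ite_eq', if_pos ((hF _ _).2 rfl)]

open ContinuousLinearMap in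
/-- Let `X` be a compact Hausdorff space, `T : X → X` a covering map, and
`S` the bounded operator on `ℓ²(X)` with `S e_x = (ℒ(1)(x))^{-1/2} ∑_{y ∈ T⁻¹({x})} e_y`.
Let `V₁, …, V_t` be a finite open cover of `X` on each member of which `T` is injective,
let `v₁, …, v_t : X → [0,1]` be a continuous partition of unity subordinate to it, and put
`uᵢ = ((ℒ(1)∘T)·vᵢ)^{1/2}`. Then `∑ᵢ M_{uᵢ} S S* M_{uᵢ} = 1` on `ℓ²(X)`. -/
theorem sum_Mu_S_adjointS_Mu_eq_one {X : Type*} [TopologicalSpace X] [CompactSpace X]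
    [T2Space X] (T : X → X) (hT : IsCoveringMap T) (hTsurj : Function.Surjective T)
    (S : l2 X →L[ℂ] l2 X)
    (hS : ∀ x : X, S (e x) = (((Real.sqrt (Nat.card (T ⁻¹' {x})))⁻¹ : ℝ) : ℂ) •
      ∑ᶠ y ∈ T ⁻¹' {x}, e y)
    (t : ℕ) (V : Fin t → Set X) (hVopen : ∀ i, IsOpen (V i))
    (hVcover : (⋃ i, V i) = Set.univ) (hVinj : ∀ i, Set.InjOn T (V i))
    (v : Fin t → C(X, ℝ)) (hv01 : ∀ i x, v i x ∈ Set.Icc (0 : ℝ) 1)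
    (hvsum : ∀ x : X, ∑ i, v i x = 1) (hvsupp : ∀ i, tsupport (v i) ⊆ V i)
    (Mu : Fin t → (l2 X →L[ℂ] l2 X))
    (hMu : ∀ i (x : X), Mu i (e x) =
      ((Real.sqrt ((Nat.card (T ⁻¹' {T x}) : ℝ) * v i x) : ℝ) : ℂ) • e x) :
    ∑ i, Mu i ∘L S ∘L (adjoint S) ∘L Mu i = 1 :=
  sum_Mu_S_adjointS_Mu_eq_one_general T S hS t V hVcover hVinj v hv01 hvsum hvsupp Mu hMu
end
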